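/- arXiv:1303.0153 — 4 statements merged into one kernel-verified Lean document; each statement's English description precedes it below -/
import Mathlib

section
/- Let I be an EI-category. Then the category dI, whose objects are pairs of morphisms (h1 : i ⟶ j, h2 : j ⟶ i) and whose morphisms from (h1, h2) to (k1 : i' ⟶ j', k2 : j' ⟶ i') are pairs (m1 : i' ⟶ i, m2 : j ⟶ j') making the evident two squares commute (m2 ∘ h1 ∘ m1 = k1 and m1 ∘ k2 ∘ m2 = h2), is a groupoid. -/
/-! In an EI-category any morphism `m : X ⟶ Y` admitting some morphism `t : Y ⟶ X` back is an
isomorphism, since `m ≫ t` and `t ≫ m` are endomorphisms, hence invertible. For a morphism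
`(m1, m2)` of `dI` the two commuting squares provide such morphisms back, namely
`h1 ≫ m2 ≫ k2` for `m1` and `k2 ≫ m1 ≫ h1` for `m2`; and a morphism of `dI` with invertible
components is invertible. -/

open CategoryTheory

/-- Objects of the category `dI`: pairs of opposing morphisms `h1 : i ⟶ j`, `h2 : j ⟶ i`. -/
structure DObj (I : Type*) [Category I] where
  i : I
  j : I
  h1 : i ⟶ j
  h2 : j ⟶ i

/-- Morphisms of `dI` from `(h1, h2)` to `(k1, k2)`: pairs `(m1 : i' ⟶ i, m2 : j ⟶ j')`
making the two evident squares commute. -/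
@[ext]
structure DHom {I : Type*} [Category I] (A B : DObj I) where
  m1 : B.i ⟶ A.i
  m2 : A.j ⟶ B.j
  w1 : m1 ≫ A.h1 ≫ m2 = B.h1
  w2 : m2 ≫ B.h2 ≫ m1 = A.h2

instance (I : Type*) [Category I] : Category (DObj I) where
  Hom := DHom
  id A := ⟨𝟙 _, 𝟙 _, by simp, by simp⟩
  comp {A B C} f g :=
    ⟨g.m1 ≫ f.m1, f.m2 ≫ g.m2, by
      simp only [Category.assoc]
      slice_lhs 2 4 => rw [f.w1]
      simpa using g.w1, by
      simp only [Category.assoc]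
      slice_lhs 2 4 => rw [g.w2]
      simpa using f.w2⟩
  id_comp f := by apply DHom.ext <;> simp [CategoryStruct.comp, CategoryStruct.id]
  comp_id f := by apply DHom.ext <;> simp [CategoryStruct.comp, CategoryStruct.id]
  assoc f g h := by apply DHom.ext <;> simp [CategoryStruct.comp]

namespace CategoryTheory

variable {C : Type*} [Category C] {X Y : C}

theorem isIso_of_isIso_comp_of_isIso_comp (m : X ⟶ Y) (t : Y ⟶ X) [IsIso (m ≫ t)]
    [IsIso (t ≫ m)] : IsIso m :=
  have : Mono m := mono_of_mono m t
  have : IsSplitEpi m := IsSplitEpi.mk' ⟨inv (t ≫ m) ≫ t, by simp⟩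
  isIso_of_mono_of_isSplitEpi m

theorem isIso_of_forall_isIso_endo (hEI : ∀ (i : C) (f : i ⟶ i), IsIso f) (m : X ⟶ Y)
    (t : Y ⟶ X) : IsIso m :=
  have := hEI X (m ≫ t)
  have := hEI Y (t ≫ m)
  isIso_of_isIso_comp_of_isIso_comp m t

end CategoryTheory

namespace DHom

variable {I : Type*} [Category I] {A B : DObj I}

@[simp]
theorem id_m1 (A : DObj I) : (𝟙 A : A ⟶ A).m1 = 𝟙 A.i := rfl

@[simp]
theorem id_m2 (A : DObj I) : (𝟙 A : A ⟶ A).m2 = 𝟙 A.j := rfl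

@[simp]
theorem comp_m1 {C : DObj I} (f : A ⟶ B) (g : B ⟶ C) : (f ≫ g).m1 = g.m1 ≫ f.m1 := rfl

@[simp]
theorem comp_m2 {C : DObj I} (f : A ⟶ B) (g : B ⟶ C) : (f ≫ g).m2 = f.m2 ≫ g.m2 := rfl

theorem isIso_of_isIso (f : A ⟶ B) [IsIso f.m1] [IsIso f.m2] : IsIso f := by
  let g : B ⟶ A :=
    ⟨inv f.m1, inv f.m2, by rw [← f.w1]; simp, by rw [← f.w2]; simp⟩
  exact ⟨g, DHom.ext (by simp [g]) (by simp [g]), DHom.ext (by simp [g]) (by simp [g])⟩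

end DHom

/-- If `I` is an EI-category, then `dI` is a groupoid, i.e. every morphism
of `dI` is an isomorphism. -/
theorem stmt_1 {I : Type*} [Category I]
    (hEI : ∀ (i : I) (f : i ⟶ i), IsIso f)
    {A B : DObj I} (f : A ⟶ B) : IsIso f := by
  have := isIso_of_forall_isIso_endo hEI f.m1 (A.h1 ≫ f.m2 ≫ B.h2)
  have := isIso_of_forall_isIso_endo hEI f.m2 (B.h2 ≫ f.m1 ≫ A.h1)
  exact DHom.isIso_of_isIso f
end

section
/- Let I be an EI-category and let h : i ⟶ i and k : j ⟶ j be endomorphisms. Then the objects (1_i, h) and (1_j, k) lie in the same connected component of the groupoid dI if and only if h and k are isomorphic as objects of the endomorphism category E(I), i.e. there exists an isomorphism m : i ⟶ j with m ∘ h = k ∘ m. -/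
/-!
A morphism `(m1, m2)` of `dI` from `(a, b)` to `(a', b')` satisfies
`m1 ≫ a ≫ b = (a' ≫ b') ≫ m1`, so `m1` is a morphism of `E(I)` from `a' ≫ b'` to `a ≫ b`.
In an EI-category every morphism `x ⟶ y` admitting some morphism `y ⟶ x` is invertible (it is
split mono and split epi, since both composites are automorphisms), so `m1` is an isomorphism and
the isomorphism class of `a ≫ b` in `E(I)` is constant on connected components of `dI`.
For `(1_i, h)` this class is that of `h`. Conversely, a conjugating isomorphism `m` gives the
morphism `(m⁻¹, m)` from `(1_i, h)` to `(1_j, k)`.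
-/

open CategoryTheory

theorem isIso_of_hom_of_hom {I : Type*} [Category I] (hEI : ∀ (i : I) (f : i ⟶ i), IsIso f)
    {x y : I} (a : x ⟶ y) (b : y ⟶ x) : IsIso a := by
  have := hEI x (a ≫ b)
  have := hEI y (b ≫ a)
  have : IsSplitMono a :=
    IsSplitMono.mk' ⟨b ≫ inv (a ≫ b), by rw [← Category.assoc, IsIso.hom_inv_id]⟩
  have : IsSplitEpi a :=
    IsSplitEpi.mk' ⟨inv (b ≫ a) ≫ b, by rw [Category.assoc, IsIso.inv_hom_id]⟩
  exact isIso_of_epi_of_isSplitMono a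

/-- The endomorphism category `E(I)`, as the algebras of the identity functor: an object is an
endomorphism `str : a ⟶ a`, and a morphism `f` satisfies `f ≫ str' = str ≫ f`. -/
abbrev EndoCat (I : Type*) [Category I] := Endofunctor.Algebra (𝟭 I)

theorem EndoCat.isIsomorphic_mk_iff {I : Type*} [Category I] {i j : I} (h : i ⟶ i)
    (k : j ⟶ j) :
    IsIsomorphic (⟨i, h⟩ : EndoCat I) ⟨j, k⟩ ↔ ∃ m : i ⟶ j, IsIso m ∧ h ≫ m = m ≫ k := by
  constructor
  · rintro ⟨e⟩
    exact ⟨e.hom.f, (Endofunctor.Algebra.forget _).map_isIso e.hom, e.hom.h.symm⟩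
  · rintro ⟨m, hm, w⟩
    exact ⟨Endofunctor.Algebra.isoMk (asIso m) w.symm⟩

namespace DObj

variable {I : Type*} [Category I]

def toEndo (X : DObj I) : EndoCat I := ⟨X.i, X.h1 ≫ X.h2⟩

def ofEndo (A : EndoCat I) : DObj I := ⟨A.a, A.a, 𝟙 A.a, A.str⟩

def homOfEndoIso {A B : EndoCat I} (e : A ≅ B) : ofEndo A ⟶ ofEndo B :=
  ⟨e.inv.f, e.hom.f, by simp [ofEndo, ← Endofunctor.Algebra.comp_f], by
    simp only [ofEndo, Functor.id_map, ← e.inv.h, ← Category.assoc]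
    rw [← Endofunctor.Algebra.comp_f, e.hom_inv_id, Endofunctor.Algebra.id_f, Category.id_comp]⟩

end DObj

namespace DHom

variable {I : Type*} [Category I] {X Y : DObj I}

theorem m1_comp_h1_comp_h2 (f : DHom X Y) : f.m1 ≫ X.h1 ≫ X.h2 = (Y.h1 ≫ Y.h2) ≫ f.m1 := by
  rw [← f.w2, ← f.w1]
  simp only [Category.assoc]

def toEndo (f : DHom X Y) : Y.toEndo ⟶ X.toEndo := ⟨f.m1, f.m1_comp_h1_comp_h2⟩

theorem isIso_toEndo (hEI : ∀ (i : I) (f : i ⟶ i), IsIso f) (f : DHom X Y) : IsIso f.toEndo :=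
  have : IsIso f.toEndo.f := isIso_of_hom_of_hom hEI f.m1 (X.h1 ≫ f.m2 ≫ Y.h2)
  Endofunctor.Algebra.iso_of_iso f.toEndo

end DHom

theorem DObj.isIsomorphic_toEndo_of_zigzag {I : Type*} [Category I]
    (hEI : ∀ (i : I) (f : i ⟶ i), IsIso f) {X Y : DObj I} (hXY : Zigzag X Y) :
    IsIsomorphic X.toEndo Y.toEndo := by
  refine Relation.reflTransGen_le_of_equivalence_of_le
    ((isIsomorphicSetoid (EndoCat I)).iseqv.comap toEndo) ?_ X Y hXY
  rintro X Y (⟨⟨f⟩⟩ | ⟨⟨f⟩⟩)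
  · have := f.isIso_toEndo hEI
    exact ⟨(asIso f.toEndo).symm⟩
  · have := f.isIso_toEndo hEI
    exact ⟨asIso f.toEndo⟩

/-- Let `I` be an EI-category, `h : i ⟶ i`, `k : j ⟶ j` endomorphisms.
The objects `(1_i, h)` and `(1_j, k)` of `dI` lie in the same connected component (zigzag)
iff `h` and `k` are isomorphic in the endomorphism category, i.e. there is an isomorphism
`m : i ⟶ j` with `m ∘ h = k ∘ m`. -/
theorem stmt_2 {I : Type*} [Category I]
    (hEI : ∀ (i : I) (f : i ⟶ i), IsIso f)
    {i j : I} (h : i ⟶ i) (k : j ⟶ j) :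
    Zigzag (⟨i, i, 𝟙 i, h⟩ : DObj I) (⟨j, j, 𝟙 j, k⟩ : DObj I) ↔
      ∃ m : i ⟶ j, IsIso m ∧ h ≫ m = m ≫ k := by
  rw [← EndoCat.isIsomorphic_mk_iff]
  constructor
  · intro hz
    simpa [DObj.toEndo] using DObj.isIsomorphic_toEndo_of_zigzag hEI hz
  · rintro ⟨e⟩
    exact Zigzag.of_hom (DObj.homOfEndoIso e)
end

section
/- Let I be a finite skeletal EI-category. Then there is a linear ordering of the objects of I such that the ζ-matrix (ζ(i,j))_{i,j}, where ζ(i,j) = #I(i,j), is upper triangular with diagonal entries #G_i = #I(i,i). Consequently det(ζ) = ∏_i #G_i, and ζ is invertible over any commutative ring R in which ∏_i #G_i is invertible. -/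
/-!
Write `i ≤ j` when there is a morphism `i ⟶ j`. In an EI-category a pair of morphisms
`f : i ⟶ j`, `g : j ⟶ i` makes `f` an isomorphism (both composites are automorphisms, so `f` is
split mono and split epi), hence in a skeletal one `≤` is a partial order. Numbering the objects
along a linear extension of it, there are no morphisms from later to earlier objects, so the
ζ-matrix is upper triangular and its determinant is the product of the `#G_i`.
-/

open CategoryTheory

theorem Fintype.exists_equiv_fin_monotone (α : Type*) [PartialOrder α] [Fintype α] :
    ∃ e : α ≃ Fin (Fintype.card α), Monotone e := by
  let : Fintype (LinearExtension α) := inferInstanceAs (Fintype α)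
  let e₀ := monoEquivOfFin (LinearExtension α) (rfl : Fintype.card (LinearExtension α) = _)
  refine ⟨e₀.symm.toEquiv, fun x y hxy => ?_⟩
  exact e₀.symm.monotone (toLinearExtension.monotone hxy)

namespace CategoryTheory

variable {I : Type*} [Category I]

theorem isIso_of_hom_of_hom (hEI : ∀ (i : I) (f : i ⟶ i), IsIso f) {i j : I}
    (f : i ⟶ j) (g : j ⟶ i) : IsIso f := by
  have := hEI _ (f ≫ g)
  have := hEI _ (g ≫ f)
  have : IsSplitMono f :=
    IsSplitMono.mk' ⟨g ≫ inv (f ≫ g), by rw [← Category.assoc, IsIso.hom_inv_id]⟩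
  have : IsSplitEpi f :=
    IsSplitEpi.mk' ⟨inv (g ≫ f) ≫ g, by rw [Category.assoc, IsIso.inv_hom_id]⟩
  exact isIso_of_mono_of_isSplitEpi f

abbrev homPartialOrder (hskel : Skeletal I) (hEI : ∀ (i : I) (f : i ⟶ i), IsIso f) :
    PartialOrder I where
  le i j := Nonempty (i ⟶ j)
  le_refl i := ⟨𝟙 i⟩
  le_trans _ _ _ := fun ⟨f⟩ ⟨g⟩ => ⟨f ≫ g⟩
  le_antisymm _ _ := fun ⟨f⟩ ⟨g⟩ =>
    haveI := isIso_of_hom_of_hom hEI f g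
    hskel ⟨asIso f⟩

theorem exists_equiv_fin_isEmpty_hom_of_lt [Fintype I] (hskel : Skeletal I)
    (hEI : ∀ (i : I) (f : i ⟶ i), IsIso f) :
    ∃ e : I ≃ Fin (Fintype.card I), ∀ a b, b < a → IsEmpty (e.symm a ⟶ e.symm b) := by
  let := homPartialOrder hskel hEI
  obtain ⟨e, he⟩ := Fintype.exists_equiv_fin_monotone I
  refine ⟨e, fun a b hba => ⟨fun f => ?_⟩⟩
  have hab : a ≤ b := by simpa using he (show e.symm a ≤ e.symm b from ⟨f⟩)
  exact absurd hab (not_le.mpr hba)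

theorem det_natCard_hom_of_isEmpty_hom_of_lt [Fintype I] (R : Type*) [CommRing R]
    (e : I ≃ Fin (Fintype.card I)) (he : ∀ a b, b < a → IsEmpty (e.symm a ⟶ e.symm b)) :
    (Matrix.of fun a b => (Nat.card (e.symm a ⟶ e.symm b) : R)).det
      = ∏ i : I, (Nat.card (i ⟶ i) : R) := by
  rw [Matrix.det_of_isUpperTriangular]
  · exact Equiv.prod_comp e.symm fun i => (Nat.card (i ⟶ i) : R)
  · intro a b hba
    have := he a b hba
    simp

end CategoryTheory

/-- A finite skeletal EI-category admits a linear ordering of its objects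
making the ζ-matrix `(#I(i,j))` upper triangular (its diagonal entries are the `#G_i` by
definition); consequently its determinant is `∏ i, #G_i` and the matrix is invertible over
any commutative ring in which `∏ i, #G_i` is invertible. -/
theorem stmt_7 {I : Type*} [Category I] [Fintype I] [∀ i j : I, Fintype (i ⟶ j)]
    (hskel : Skeletal I) (hEI : ∀ (i : I) (f : i ⟶ i), IsIso f) :
    ∃ e : I ≃ Fin (Fintype.card I),
      (∀ a b : Fin (Fintype.card I), b < a → Nat.card (e.symm a ⟶ e.symm b) = 0) ∧
      (Matrix.of fun a b : Fin (Fintype.card I) =>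
          ((Nat.card (e.symm a ⟶ e.symm b) : ℤ))).det
        = ∏ i : I, (Nat.card (i ⟶ i) : ℤ) ∧
      ∀ (R : Type*) [CommRing R],
        IsUnit ((∏ i : I, (Nat.card (i ⟶ i) : ℕ) : ℕ) : R) →
          IsUnit (Matrix.of fun a b : Fin (Fintype.card I) =>
            ((Nat.card (e.symm a ⟶ e.symm b) : ℕ) : R)) := by
  obtain ⟨e, he⟩ := exists_equiv_fin_isEmpty_hom_of_lt hskel hEI
  refine ⟨e, fun a b hba => ?_, det_natCard_hom_of_isEmpty_hom_of_lt ℤ e he, fun R _ hunit => ?_⟩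
  · have := he a b hba
    exact Nat.card_of_isEmpty
  · rw [Matrix.isUnit_iff_isUnit_det, det_natCard_hom_of_isEmpty_hom_of_lt R e he]
    simpa only [Nat.cast_prod] using hunit
end

section
/- Let I be a finite EI-category with skeleton J of the endomorphism category E(I), and R a commutative ring in which the characteristic χ(I) = rad(∏_{i} #G_i) is invertible. Then the coefficients λ_{(j,k)} = Σ_{(i,h) ∈ J_0} Σ_{n ≥ 0} (−1)^n Σ (#[h_0]/#G_{i_0}) ⋯ (#[h_n]/#G_{i_n}), where the inner sum ranges over non-degenerate paths (i,h) = (i_0,h_0) ⟶ ⋯ ⟶ (i_n,h_n) = (j,k) in J, define the unique R-coweighting on J. -/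
open CategoryTheory

/-- Objects of the endomorphism category `E(I)`: endomorphisms `h : i ⟶ i` of `I`. -/
structure EObj (I : Type*) [Category I] where
  i : I
  h : i ⟶ i

/-- Morphisms of `E(I)` from `(i, h)` to `(j, k)`: morphisms `m : i ⟶ j` of `I` with
`m ∘ h = k ∘ m`. -/
@[ext]
structure EHom {I : Type*} [Category I] (x y : EObj I) where
  m : x.i ⟶ y.i
  w : x.h ≫ m = m ≫ y.h

instance (I : Type*) [Category I] : Category (EObj I) where
  Hom := EHom
  id x := ⟨𝟙 _, by simp⟩
  comp {x y z} f g := ⟨f.m ≫ g.m, by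
    rw [← Category.assoc, f.w, Category.assoc, g.w, ← Category.assoc]⟩
  id_comp f := by apply EHom.ext; simp [CategoryStruct.comp, CategoryStruct.id]
  comp_id f := by apply EHom.ext; simp [CategoryStruct.comp, CategoryStruct.id]
  assoc f g h := by apply EHom.ext; simp [CategoryStruct.comp]

open scoped Classical

variable {I : Type*} [Category I]

/-- The ratio `#[h] / #G_i` in `R`: the size of the conjugacy class of `h : i ⟶ i`
(elements `g` conjugate to `h` via an isomorphism `m`) times the inverse of `#G_i`. -/
noncomputable def classRatio (R : Type*) [CommRing R] (x : EObj I) : R :=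
  ((Nat.card {g : x.i ⟶ x.i // ∃ m : x.i ⟶ x.i, IsIso m ∧ x.h ≫ m = m ≫ g} : ℕ) : R) *
    Ring.inverse ((Nat.card (x.i ⟶ x.i) : ℕ) : R)

/-- Non-degenerate paths of length `n` from `x` to `y` in the skeleton `J ⊆ E(I)` cut out
by `P`: chains of `n` composable morphisms between pairwise distinct objects of `J`. -/
structure NDPath (P : EObj I → Prop) (x y : {z : EObj I // P z}) (n : ℕ) where
  obj : Fin (n + 1) → {z : EObj I // P z}
  hom : ∀ l : Fin n, ((obj l.castSucc).1 ⟶ (obj l.succ).1)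
  src : obj 0 = x
  tgt : obj (Fin.last n) = y
  nondeg : Function.Injective obj

/-- The candidate coweighting: `λ_{(j,k)} = ∑_{(i,h) ∈ J} ∑_{n ≥ 0} (-1)^n
∑_{non-degenerate paths (i,h) → ⋯ → (j,k)} (#[h_0]/#G_{i_0}) ⋯ (#[h_n]/#G_{i_n})`. -/
noncomputable def leinsterCoweighting (R : Type*) [CommRing R] (P : EObj I → Prop)
    (y : {z : EObj I // P z}) : R :=
  ∑ᶠ x : {z : EObj I // P z}, ∑ᶠ n : ℕ, (-1 : R) ^ n *
    ∑ᶠ p : NDPath P x y n, ∏ l : Fin (n + 1), classRatio R (p.obj l).1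

/-!
Order the skeleton `J` by `x ≤ y` iff `J(x, y)` is nonempty. Every endomorphism of `I`, hence
of `E(I)`, is invertible, and `J` meets each isomorphism class once, so this is a partial order
and the zeta matrix `ζ(x, y) = #J(x, y)` is triangular. Its diagonal entry `#J((i,h),(i,h))` is
the centralizer of `h` in `G_i`, so orbit–stabilizer for conjugation gives
`ζ(x, x) · #[h]/#G_i = 1` as soon as `#G_i` is invertible. With `D = diag(#[h]/#G_i)` this reads
`ζ D = 1 + A`, where `A` is the off-diagonal part of `ζ` times `D`; `A` is nilpotent, hence
`ζ⁻¹ = D ∑ₙ (-A)ⁿ`. The `(x, y)` entry of `D Aⁿ` is the paper's sum over non-degenerate paths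
of length `n`: a path of nonzero weight is strictly increasing, so it never repeats an object.
The coweighting is then the vector of column sums of `ζ⁻¹`, unique because `ζ` is invertible.
-/

open Finset Matrix

theorem isUnit_natCast_of_forall_prime_dvd {R : Type*} [CommSemiring R] {n : ℕ} (hn : n ≠ 0)
    (h : ∀ p : ℕ, p.Prime → p ∣ n → IsUnit (p : R)) : IsUnit (n : R) := by
  induction n using Nat.recOnMul with
  | zero => exact absurd rfl hn
  | one => simp
  | prime p hp => exact h p hp dvd_rfl
  | mul a b iha ihb =>
    obtain ⟨ha, hb⟩ := mul_ne_zero_iff.1 hn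
    rw [Nat.cast_mul]
    exact (iha ha fun p hp hpa => h p hp (hpa.mul_right b)).mul
      (ihb hb fun p hp hpb => h p hp (hpb.mul_left a))

theorem natCard_isConj_mul_natCard_centralizer {G : Type*} [Group G] (g : G) :
    Nat.card {c // IsConj g c} * Nat.card (Subgroup.centralizer {g}) = Nat.card G := by
  have h := (MulAction.stabilizer (ConjAct G) g).card_mul_index
  rw [MulAction.index_stabilizer, ← Nat.card_coe_set_eq, mul_comm] at h
  rw [Subgroup.nat_card_centralizer_nat_card_stabilizer]
  refine Eq.trans ?_ h
  congr 1
  exact Nat.card_congr <| Equiv.subtypeEquivRight fun c => by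
    rw [ConjAct.mem_orbit_conjAct, isConj_comm]

section EICategory

variable {C : Type*} [Category C]

theorem isIso_of_hom_of_forall_isIso_endo (hEI : ∀ (a : C) (f : a ⟶ a), IsIso f) {a b : C}
    (f : a ⟶ b) (g : b ⟶ a) : IsIso f := by
  have := hEI a (f ≫ g)
  have := hEI b (g ≫ f)
  have : Epi f := epi_of_epi g f
  have : IsSplitMono f :=
    IsSplitMono.mk' ⟨g ≫ inv (f ≫ g), by rw [← Category.assoc, IsIso.hom_inv_id]⟩
  exact isIso_of_epi_of_isSplitMono f

theorem CategoryTheory.ThinSkeleton.mk_lt_mk_of_hom (hEI : ∀ (a : C) (f : a ⟶ a), IsIso f)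
    {a b : C} (f : a ⟶ b) (h : ¬ Nonempty (a ≅ b)) : ThinSkeleton.mk a < ThinSkeleton.mk b :=
  lt_of_le_not_ge ⟨f⟩ fun ⟨g⟩ =>
    have := isIso_of_hom_of_forall_isIso_endo hEI f g
    h ⟨asIso f⟩

end EICategory

namespace Matrix

variable {J R : Type*} [CommRing R]

theorem injective_of_prod_ne_zero {β : Type*} [Preorder β] (f : J → β) (A : Matrix J J R)
    (hA : ∀ a b, A a b ≠ 0 → f a < f b) {n : ℕ} (o : Fin (n + 1) → J)
    (ho : ∏ l : Fin n, A (o l.castSucc) (o l.succ) ≠ 0) : Function.Injective o :=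
  (Fin.strictMono_iff_lt_succ.2 fun l =>
    hA _ _ fun h => ho (prod_eq_zero (mem_univ l) h)).injective.of_comp

variable [DecidableEq J]

theorem lt_of_sub_diagonal_diag_apply_ne_zero {β : Type*} [Preorder β] (f : J → β)
    (Z : Matrix J J R) (hZ : ∀ a b, a ≠ b → Z a b ≠ 0 → f a < f b) (a b : J)
    (h : (Z - diagonal Z.diag) a b ≠ 0) : f a < f b := by
  by_cases hab : a = b
  · subst hab
    simp at h
  · rw [Matrix.sub_apply, diagonal_apply_ne _ hab, sub_zero] at h
    exact hZ a b hab h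

theorem prod_sub_diagonal_diag_eq_ite {β : Type*} [Preorder β] (f : J → β)
    (Z : Matrix J J R) (hZ : ∀ a b, a ≠ b → Z a b ≠ 0 → f a < f b) {n : ℕ}
    (o : Fin (n + 1) → J) :
    ∏ l : Fin n, (Z - diagonal Z.diag) (o l.castSucc) (o l.succ) =
      if Function.Injective o then ∏ l : Fin n, Z (o l.castSucc) (o l.succ) else 0 := by
  split_ifs with ho
  · refine prod_congr rfl fun l _ => ?_
    rw [Matrix.sub_apply, diagonal_apply_ne _ (ho.ne Fin.castSucc_lt_succ.ne), sub_zero]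
  · by_contra h
    exact ho (injective_of_prod_ne_zero f _ (lt_of_sub_diagonal_diag_apply_ne_zero f Z hZ) o h)

variable [Fintype J]

theorem pow_apply_eq_sum_path (A : Matrix J J R) (n : ℕ) (x y : J) :
    (A ^ n) x y = ∑ o : Fin (n + 1) → J with o 0 = x ∧ o (Fin.last n) = y,
      ∏ l : Fin n, A (o l.castSucc) (o l.succ) := by
  induction n generalizing x with
  | zero =>
    have : (univ.filter fun o : Fin 1 → J => o 0 = x ∧ o (Fin.last 0) = y) =
        if x = y then {fun _ => x} else ∅ := by
      ext o
      split_ifs with hxy <;> simp [funext_iff, Fin.forall_fin_one, hxy]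
      exact fun hx hy => hxy (hx.symm.trans hy)
    rw [this, pow_zero, one_apply]
    split_ifs <;> simp
  | succ n ih =>
    set s := univ.filter fun o : Fin (n + 1) → J => o (Fin.last n) = y
    calc (A ^ (n + 1)) x y = ∑ z, A x z * (A ^ n) z y := by rw [pow_succ', mul_apply]
      _ = ∑ z, ∑ o ∈ s with o 0 = z,
            A x (o 0) * ∏ l : Fin n, A (o l.castSucc) (o l.succ) := by
        refine sum_congr rfl fun z _ => ?_
        rw [ih, mul_sum, filter_filter]
        refine sum_congr (by ext; simp [and_comm]) fun o ho => ?_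
        rw [(mem_filter.1 ho).2.2]
      _ = ∑ o ∈ s, A x (o 0) * ∏ l : Fin n, A (o l.castSucc) (o l.succ) := sum_fiberwise _ _ _
      _ = _ := by
        refine sum_nbij' (fun o => (Fin.cons x o : Fin (n + 2) → J)) Fin.tail (by simp [s])
          (by simp [s, Fin.tail]) (fun o _ => by simp) (fun o ho => ?_) (fun o _ => ?_)
        · obtain ⟨hx, -⟩ : o 0 = x ∧ _ := by simpa using ho
          rw [← hx]
          exact Fin.cons_self_tail o
        · rw [Fin.prod_univ_succ]
          simp

theorem pow_card_eq_zero_of_lt {β : Type*} [Preorder β] (f : J → β) (A : Matrix J J R)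
    (hA : ∀ a b, A a b ≠ 0 → f a < f b) : A ^ Fintype.card J = 0 := by
  ext x y
  rw [pow_apply_eq_sum_path, Matrix.zero_apply]
  refine sum_eq_zero fun o _ => by_contra fun ho => ?_
  simpa using Fintype.card_le_of_injective o (injective_of_prod_ne_zero f A hA o ho)

theorem mul_diagonal_mul_neg_geom_sum_eq_one (Z : Matrix J J R) (ρ : J → R)
    (hρ : ∀ x, Z x x * ρ x = 1) {K : ℕ} (hK : ((Z - diagonal Z.diag) * diagonal ρ) ^ K = 0) :
    Z * (diagonal ρ * ∑ n ∈ range K, (-((Z - diagonal Z.diag) * diagonal ρ)) ^ n) = 1 := by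
  have hZρ : Z * diagonal ρ = 1 - -((Z - diagonal Z.diag) * diagonal ρ) := by
    have hdiag : diagonal Z.diag * diagonal ρ = 1 := by
      rw [diagonal_mul_diagonal, ← diagonal_one]
      exact congrArg diagonal (funext hρ)
    rw [sub_neg_eq_add, Matrix.sub_mul, hdiag, add_sub_cancel]
  rw [← Matrix.mul_assoc, hZρ, mul_neg_geom_sum, neg_pow, hK, mul_zero, sub_zero]

theorem vecMul_eq_iff_of_mul_eq_one {Z M : Matrix J J R} (h : Z * M = 1) (μ v : J → R) :
    μ ᵥ* Z = v ↔ μ = v ᵥ* M := by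
  constructor
  · rintro rfl
    rw [vecMul_vecMul, h, vecMul_one]
  · rintro rfl
    rw [vecMul_vecMul, mul_eq_one_comm.1 h, vecMul_one]

end Matrix

theorem EObj.isIso_of_isIso_m {x y : EObj I} (f : x ⟶ y) [IsIso f.m] : IsIso f :=
  ⟨⟨⟨inv f.m, by rw [← cancel_mono f.m]; simp [f.w]⟩, EHom.ext (IsIso.hom_inv_id f.m),
    EHom.ext (IsIso.inv_hom_id f.m)⟩⟩

theorem natCard_end_mul_classRatio (hEI : ∀ (i : I) (f : i ⟶ i), IsIso f) {R : Type*}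
    [CommRing R] (x : EObj I) (hx : IsUnit (Nat.card (x.i ⟶ x.i) : R)) :
    (Nat.card (x ⟶ x) : R) * classRatio R x = 1 := by
  let : Group (End x.i) := groupOfIsUnit fun m => (isUnit_iff_isIso m).2 (hEI _ m)
  have hcent : Nat.card (x ⟶ x) = Nat.card (Subgroup.centralizer (G := End x.i) {x.h}) :=
    Nat.card_congr
      { toFun := fun f => ⟨f.m, Subgroup.mem_centralizer_singleton_iff.2 f.w⟩
        invFun := fun m => ⟨m.1, Subgroup.mem_centralizer_singleton_iff.1 m.2⟩
        left_inv := fun _ => rfl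
        right_inv := fun _ => rfl }
  have hconj : Nat.card {g : x.i ⟶ x.i // ∃ m : x.i ⟶ x.i, IsIso m ∧ x.h ≫ m = m ≫ g} =
      Nat.card {g : End x.i // IsConj (α := End x.i) x.h g} :=
    Nat.card_congr <| Equiv.subtypeEquivRight fun g =>
      ⟨fun ⟨m, hm, hw⟩ => ⟨((isUnit_iff_isIso m).2 hm).unit, hw⟩,
        fun ⟨c, hc⟩ => ⟨(c : End x.i), (isUnit_iff_isIso _).1 c.isUnit, hc⟩⟩
  rw [classRatio, ← mul_assoc, ← Nat.cast_mul, hcent, hconj, Nat.mul_comm,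
    natCard_isConj_mul_natCard_centralizer]
  exact Ring.mul_inverse_cancel _ hx

noncomputable def zetaMatrix (R : Type*) [CommRing R] (P : EObj I → Prop) :
    Matrix {z // P z} {z // P z} R :=
  fun x y => Nat.card (x.1 ⟶ y.1)

section Finite

variable [Fintype I] [∀ i j : I, Fintype (i ⟶ j)]

noncomputable instance EObj.fintypeHom (x y : EObj I) : Fintype (x ⟶ y) :=
  Fintype.ofInjective (fun f : EHom x y => f.m) fun _ _ => EHom.ext

noncomputable instance EObj.fintype : Fintype (EObj I) :=
  Fintype.ofInjective (fun x => (⟨x.i, x.h⟩ : Σ i : I, i ⟶ i)) (by rintro ⟨⟩ ⟨⟩ h; simpa using h)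

noncomputable def stepMatrix (R : Type*) [CommRing R] (P : EObj I → Prop) :
    Matrix {z // P z} {z // P z} R :=
  (zetaMatrix R P - diagonal (zetaMatrix R P).diag) *
    diagonal (fun z : {z // P z} => classRatio R z.1)

end Finite

section Skeleton

variable {P : EObj I → Prop} {R : Type*} [CommRing R]

theorem thinSkeleton_mk_lt_of_zetaMatrix_ne_zero (hEI : ∀ (i : I) (f : i ⟶ i), IsIso f)
    (huniq : ∀ y y' : EObj I, P y → P y' → Nonempty (y ≅ y') → y = y') (a b : {z // P z})
    (hab : a ≠ b) (h : zetaMatrix R P a b ≠ 0) :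
    ThinSkeleton.mk a.1 < ThinSkeleton.mk b.1 := by
  have hcard : Nat.card (a.1 ⟶ b.1) ≠ 0 := fun h0 => h (by simp [zetaMatrix, h0])
  obtain ⟨⟨f⟩, -⟩ := Nat.card_ne_zero.1 hcard
  refine ThinSkeleton.mk_lt_mk_of_hom (fun x g => ?_) f fun ⟨e⟩ =>
    hab (Subtype.ext (huniq _ _ a.2 b.2 ⟨e⟩))
  have := hEI x.i g.m
  exact EObj.isIso_of_isIso_m g

def NDPath.equivSigma (x y : {z // P z}) (n : ℕ) : NDPath P x y n ≃
    Σ o : {o : Fin (n + 1) → {z // P z} // o 0 = x ∧ o (Fin.last n) = y ∧ Function.Injective o},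
      ∀ l : Fin n, (o.1 l.castSucc).1 ⟶ (o.1 l.succ).1 where
  toFun p := ⟨⟨p.obj, p.src, p.tgt, p.nondeg⟩, p.hom⟩
  invFun q := ⟨q.1.1, q.2, q.1.2.1, q.1.2.2.1, q.1.2.2.2⟩
  left_inv _ := rfl
  right_inv _ := rfl

variable [Fintype I] [∀ i j : I, Fintype (i ⟶ j)]

theorem NDPath.finsum_eq_sum (x y : {z // P z}) (n : ℕ)
    (f : (Fin (n + 1) → {z // P z}) → R) :
    ∑ᶠ p : NDPath P x y n, f p.obj =
      ∑ o : Fin (n + 1) → {z // P z} with o 0 = x ∧ o (Fin.last n) = y ∧ Function.Injective o,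
        (∏ l : Fin n, (Nat.card ((o l.castSucc).1 ⟶ (o l.succ).1) : R)) * f o := by
  rw [← finsum_comp_equiv (NDPath.equivSigma x y n).symm, finsum_eq_sum_of_fintype,
    Fintype.sum_sigma,
    sum_subtype (p := fun o => o 0 = x ∧ o (Fin.last n) = y ∧ Function.Injective o) _ (by simp)]
  refine sum_congr rfl fun o _ => ?_
  simp [Fintype.card_pi, Nat.card_eq_fintype_card, NDPath.equivSigma]

theorem NDPath.finsum_prod_classRatio (hEI : ∀ (i : I) (f : i ⟶ i), IsIso f)
    (huniq : ∀ y y' : EObj I, P y → P y' → Nonempty (y ≅ y') → y = y') (x y : {z // P z})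
    (n : ℕ) :
    ∑ᶠ p : NDPath P x y n, ∏ l : Fin (n + 1), classRatio R (p.obj l).1 =
      (diagonal (fun z : {z // P z} => classRatio R z.1) * stepMatrix R P ^ n) x y := by
  rw [NDPath.finsum_eq_sum x y n fun o => ∏ l, classRatio R (o l).1, diagonal_mul,
    pow_apply_eq_sum_path, mul_sum]
  have hterm : ∀ o : Fin (n + 1) → {z // P z}, o 0 = x →
      classRatio R x.1 * ∏ l : Fin n, stepMatrix R P (o l.castSucc) (o l.succ) =
        if Function.Injective o then
          (∏ l : Fin n, (Nat.card ((o l.castSucc).1 ⟶ (o l.succ).1) : R)) *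
            ∏ l, classRatio R (o l).1
        else 0 := by
    rintro o rfl
    simp only [stepMatrix, mul_diagonal, prod_mul_distrib,
      prod_sub_diagonal_diag_eq_ite (fun z : {z // P z} => ThinSkeleton.mk z.1) (zetaMatrix R P)
        (thinSkeleton_mk_lt_of_zetaMatrix_ne_zero hEI huniq)]
    rw [Fin.prod_univ_succ (fun l => classRatio R (o l).1)]
    split_ifs <;> simp only [zetaMatrix, zero_mul, mul_zero]
    ring
  rw [sum_congr rfl fun o ho => hterm o (mem_filter.1 ho).2.1, ← sum_filter, filter_filter]
  simp only [and_assoc]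

theorem stepMatrix_pow_card_eq_zero (hEI : ∀ (i : I) (f : i ⟶ i), IsIso f)
    (huniq : ∀ y y' : EObj I, P y → P y' → Nonempty (y ≅ y') → y = y') :
    stepMatrix R P ^ Fintype.card {z // P z} = 0 :=
  pow_card_eq_zero_of_lt (fun z : {z // P z} => ThinSkeleton.mk z.1) _ fun a b h =>
    lt_of_sub_diagonal_diag_apply_ne_zero _ _
      (thinSkeleton_mk_lt_of_zetaMatrix_ne_zero hEI huniq) a b
      (left_ne_zero_of_mul (by rwa [stepMatrix, mul_diagonal] at h))

theorem leinsterCoweighting_eq_vecMul (hEI : ∀ (i : I) (f : i ⟶ i), IsIso f)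
    (huniq : ∀ y y' : EObj I, P y → P y' → Nonempty (y ≅ y') → y = y') :
    leinsterCoweighting R P = 1 ᵥ* (diagonal (fun z : {z // P z} => classRatio R z.1) *
      ∑ n ∈ range (Fintype.card {z // P z}), (-stepMatrix R P) ^ n) := by
  funext y
  simp only [leinsterCoweighting, NDPath.finsum_prod_classRatio hEI huniq,
    finsum_eq_sum_of_fintype, vecMul, dotProduct, Pi.one_apply, one_mul]
  refine sum_congr rfl fun x _ => ?_
  rw [finsum_eq_sum_of_support_subset _ (s := range (Fintype.card {z // P z})) ?_]
  · rw [Matrix.mul_sum, Matrix.sum_apply]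
    refine sum_congr rfl fun n _ => ?_
    rw [← neg_one_smul R (stepMatrix R P), smul_pow, Matrix.mul_smul, Matrix.smul_apply,
      smul_eq_mul]
  · intro n hn
    by_contra h
    have hzero : stepMatrix R P ^ n = 0 :=
      pow_eq_zero_of_le (by simpa using h) (stepMatrix_pow_card_eq_zero hEI huniq)
    rw [Function.mem_support, hzero, Matrix.mul_zero, Matrix.zero_apply, mul_zero] at hn
    exact hn rfl

end Skeleton

/-- Let `I` be a finite EI-category and `R` a commutative ring in which
the characteristic of `I` is invertible (every prime dividing some `#G_i` is invertible).
For any skeleton `J` of the endomorphism category `E(I)` (cut out by the predicate `P`),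
the coefficients `λ_{(j,k)}` given by the alternating sum over non-degenerate paths form
the unique `R`-coweighting on `J`. -/
theorem stmt_18 {I : Type*} [Category I] [Fintype I] [∀ i j : I, Fintype (i ⟶ j)]
    (hEI : ∀ (i : I) (f : i ⟶ i), IsIso f)
    (R : Type*) [CommRing R]
    (hchar : ∀ p : ℕ, p.Prime → (∃ i : I, p ∣ Nat.card (i ⟶ i)) → IsUnit ((p : ℕ) : R))
    (P : EObj I → Prop)
    (hex : ∀ x : EObj I, ∃ y : EObj I, P y ∧ Nonempty (x ≅ y))
    (huniq : ∀ y y' : EObj I, P y → P y' → Nonempty (y ≅ y') → y = y') :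
    (∀ y : {z : EObj I // P z},
      ∑ᶠ x : {z : EObj I // P z},
        leinsterCoweighting R P x * ((Nat.card ((x : EObj I) ⟶ (y : EObj I)) : ℕ) : R)
          = 1) ∧
    ∀ mu : {z : EObj I // P z} → R,
      (∀ y : {z : EObj I // P z},
        ∑ᶠ x : {z : EObj I // P z},
          mu x * ((Nat.card ((x : EObj I) ⟶ (y : EObj I)) : ℕ) : R) = 1) →
      mu = leinsterCoweighting R P := by
  have hG : ∀ i : I, IsUnit (Nat.card (i ⟶ i) : R) := fun i =>
    isUnit_natCast_of_forall_prime_dvd (Nat.card_ne_zero.2 ⟨⟨𝟙 i⟩, inferInstance⟩)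
      fun p hp hpi => hchar p hp ⟨i, hpi⟩
  have hinv := mul_diagonal_mul_neg_geom_sum_eq_one (zetaMatrix R P) _
    (fun x => natCard_end_mul_classRatio hEI x.1 (hG x.1.i)) (stepMatrix_pow_card_eq_zero hEI huniq)
  have hcoweight : ∀ μ : {z // P z} → R,
      (∀ y : {z // P z}, ∑ᶠ x : {z // P z}, μ x * (Nat.card (x.1 ⟶ y.1) : R) = 1) ↔
        μ ᵥ* zetaMatrix R P = 1 := fun μ => by
    simp [funext_iff, vecMul, dotProduct, finsum_eq_sum_of_fintype, zetaMatrix]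
  simp only [hcoweight, leinsterCoweighting_eq_vecMul hEI huniq]
  exact ⟨(vecMul_eq_iff_of_mul_eq_one hinv _ _).2 rfl,
    fun μ => (vecMul_eq_iff_of_mul_eq_one hinv _ _).1⟩
end
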